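/- arXiv:1612.03643 — 2 statements merged into one kernel-verified Lean document; each statement's English description precedes it below -/
import Mathlib

section
/- (i) Let (∇, ∗, E) be a Saito structure with unit e, and let (𝛁^{(0,r)}, ⋆_0, e) be its dual almost Saito structure with parameter r ∈ ℂ, defined on the subset where E∗ is invertible by x⋆_0 y = (E∗)^{-1}(x∗y) and 𝛁^{(0,r)}_x y = ∇_x y + r x⋆_0 y − ∇_{x⋆_0 y} E. Then the dual Saito structure of (𝛁^{(0,r)}, ⋆_0, e) — constructed via x∗'y = x⋆_0(e⋆_0)^{-1}(y) and ∇'_x y = 𝛁^{(0,r)}_x y − 𝛁^{(0,r)}_{x∗'y} e — equals (∇, ∗, E). (ii) Conversely, let (𝛁, ⋆, e) be an almost Saito structure with parameter r ∈ ℂ and unit E, and let (∇, ∗, E) be its dual Saito structure, defined on the subset where e⋆ is invertible by x∗y = x⋆(e⋆)^{-1}(y) and ∇_x y = 𝛁_x y − 𝛁_{x∗y} e. Then the dual almost Saito structure of (∇, ∗, E) with parameter r equals (𝛁, ⋆, e). -/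
universe u v

/-- Abstract model of the holomorphic vector fields on a complex manifold:
`A` is the commutative `ℂ`-algebra of holomorphic functions and `X` is the
`A`-module of vector fields, equipped with a Lie bracket and with an action of
vector fields on functions by derivations. -/
structure VectorFields (A : Type u) (X : Type v) [CommRing A] [Algebra ℂ A]
    [AddCommGroup X] [Module A X] where
  bracket : X → X → X
  act : X → A → A
  bracket_add_left : ∀ x y z : X, bracket (x + y) z = bracket x z + bracket y z
  bracket_antisymm : ∀ x y : X, bracket x y = - bracket y x
  jacobi : ∀ x y z : X,
    bracket x (bracket y z) + bracket y (bracket z x) + bracket z (bracket x y) = 0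
  act_add_left : ∀ (x y : X) (f : A), act (x + y) f = act x f + act y f
  act_smul_left : ∀ (f : A) (x : X) (g : A), act (f • x) g = f * act x g
  act_add_right : ∀ (x : X) (f g : A), act x (f + g) = act x f + act x g
  act_mul_right : ∀ (x : X) (f g : A), act x (f * g) = act x f * g + f * act x g
  act_algebraMap : ∀ (x : X) (c : ℂ), act x (algebraMap ℂ A c) = 0
  bracket_smul_right : ∀ (x : X) (f : A) (y : X),
    bracket x (f • y) = act x f • y + f • bracket x y
  act_bracket : ∀ (x y : X) (f : A),
    act (bracket x y) f = act x (act y f) - act y (act x f)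

variable {A : Type u} {X : Type v} [CommRing A] [Algebra ℂ A]
  [AddCommGroup X] [Module A X]

/-- A torsion-free flat connection on the tangent bundle: `ℂ`-bilinear,
`O`-linear in the first argument, Leibniz in the second, with vanishing
torsion and vanishing curvature. -/
structure IsTFFlatConnection (V : VectorFields A X) (conn : X → X → X) : Prop where
  add_left : ∀ x y z : X, conn (x + y) z = conn x z + conn y z
  smul_left : ∀ (f : A) (x y : X), conn (f • x) y = f • conn x y
  add_right : ∀ x y z : X, conn x (y + z) = conn x y + conn x z
  leibniz : ∀ (x : X) (f : A) (y : X), conn x (f • y) = V.act x f • y + f • conn x y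
  torsion_free : ∀ x y : X, conn x y - conn y x = V.bracket x y
  flat : ∀ x y z : X, conn x (conn y z) - conn y (conn x z) = conn (V.bracket x y) z

/-- An `O`-bilinear, commutative, associative multiplication on vector fields
with unit `e`. -/
structure IsUnitalMul (mul : X → X → X) (e : X) : Prop where
  add_left : ∀ x y z : X, mul (x + y) z = mul x z + mul y z
  smul_left : ∀ (f : A) (x y : X), mul (f • x) y = f • mul x y
  comm : ∀ x y : X, mul x y = mul y x
  assoc : ∀ x y z : X, mul (mul x y) z = mul x (mul y z)
  unit : ∀ x : X, mul e x = x

/-- A Saito structure (without metric) on a manifold, with connection `conn`,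
multiplication `mul` with unit `e`, and Euler vector field `E`. -/
structure IsSaitoStructure (V : VectorFields A X) (conn mul : X → X → X) (e E : X) :
    Prop where
  conn_flat : IsTFFlatConnection V conn
  mul_unital : IsUnitalMul (A := A) mul e
  SS1 : ∀ x y z : X,
    conn x (mul y z) - mul y (conn x z) - conn y (mul x z) + mul x (conn y z)
      = mul (V.bracket x y) z
  SS2 : ∀ x y : X,
    V.bracket E (mul x y) - mul (V.bracket E x) y - mul x (V.bracket E y) = mul x y
  SS3 : ∀ x : X, conn x e = 0
  SS4 : ∀ x y : X, conn x (conn y E) - conn (conn x y) E = 0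

/-- An almost Saito structure with parameter `r`, with connection `conn`,
multiplication `mul` with unit `E`, and nonzero vector field `e`. -/
structure IsAlmostSaitoStructure (V : VectorFields A X) (conn mul : X → X → X)
    (e E : X) (r : ℂ) : Prop where
  conn_flat : IsTFFlatConnection V conn
  mul_unital : IsUnitalMul (A := A) mul E
  e_ne_zero : e ≠ 0
  ASS1 : ∀ x y z : X,
    conn x (mul y z) - mul y (conn x z) - conn y (mul x z) + mul x (conn y z)
      = mul (V.bracket x y) z
  ASS2 : ∀ x y : X,
    V.bracket e (mul x y) - mul (V.bracket e x) y - mul x (V.bracket e y)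
      + mul e (mul x y) = 0
  ASS3 : ∀ x : X, conn x E = algebraMap ℂ A r • x
  ASS4 : ∀ x y : X,
    conn x (conn y e) - conn (conn x y) e + conn (mul x y) e = 0

/-!
Both dualities twist a product by an invertible element `a`:
`x ∘ y = (a·)⁻¹(x·y) = x·(a·)⁻¹(y)`. In the twisted product, multiplication by the old unit is
`(a·)⁻¹`, so dualising again untwists by `a·` and returns the original product. Since also
`(x·y) ∘ u = x ∘ y` for the old unit `u`, the correction term of the second dual connection
cancels those of the first one, up to `∇_{x∗y} e = 0` in (i) and `𝛁_{x⋆y} E = r x⋆y` in (ii).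
-/

open Function

theorem Function.invFun_invFun {α β : Type*} [Nonempty α] [Nonempty β] {f : α → β}
    (hf : Bijective f) : invFun (invFun f) = f :=
  invFun_eq_of_injective_of_rightInverse (rightInverse_invFun hf.surjective).injective
    (leftInverse_invFun hf.injective)

namespace IsUnitalMul

variable {R M : Type*} [CommRing R] [AddCommGroup M] [Module R M] {mul : M → M → M} {u : M}

theorem left_comm (h : IsUnitalMul (A := R) mul u) (x y z : M) :
    mul x (mul y z) = mul y (mul x z) := by
  rw [← h.assoc, h.comm x y, h.assoc]

theorem mul_unit (h : IsUnitalMul (A := R) mul u) (x : M) : mul x u = x := by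
  rw [h.comm, h.unit]

variable {a : M}

theorem mul_invFun_mul_left (h : IsUnitalMul (A := R) mul u)
    (ha : Bijective (fun v : M => mul a v)) (x y : M) :
    mul x (invFun (fun v : M => mul a v) y) = invFun (fun v : M => mul a v) (mul x y) :=
  ha.injective <| by
    simp only [h.left_comm a x, rightInverse_invFun ha.surjective _]

theorem invFun_mul_left_mul_mul_left (h : IsUnitalMul (A := R) mul u)
    (ha : Bijective (fun v : M => mul a v)) (x y : M) :
    invFun (fun v : M => mul a v) (mul x (mul a y)) = mul x y := by
  rw [h.left_comm x a]
  exact leftInverse_invFun ha.injective _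

end IsUnitalMul

theorem IsSaitoStructure.dual_dual {V : VectorFields A X} {conn mul : X → X → X} {e E : X}
    (hS : IsSaitoStructure V conn mul e E) (hE : Bijective (fun v : X => mul E v)) (r : ℂ)
    {star conn2 mulBack connBack : X → X → X}
    (hstar : ∀ x y : X, star x y = invFun (fun v : X => mul E v) (mul x y))
    (hconn2 : ∀ x y : X, conn2 x y
      = conn x y + algebraMap ℂ A r • star x y - conn (star x y) E)
    (hmulBack : ∀ x y : X, mulBack x y = star x (invFun (fun v : X => star e v) y))
    (hconnBack : ∀ x y : X, connBack x y = conn2 x y - conn2 (mulBack x y) e) :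
    mulBack = mul ∧ connBack = conn := by
  have hm := hS.mul_unital
  have hstar_unit : (fun v : X => star e v) = invFun (fun v : X => mul E v) := by
    ext v
    rw [hstar, hm.unit]
  have hmulBack_eq : ∀ x y, mulBack x y = mul x y := by
    intro x y
    rw [hmulBack, hstar_unit, invFun_invFun hE, hstar, hm.invFun_mul_left_mul_mul_left hE]
  refine ⟨funext₂ hmulBack_eq, funext₂ fun x y => ?_⟩
  rw [hconnBack, hconn2, hconn2, hmulBack_eq, hstar (mul x y), hm.mul_unit, ← hstar, hS.SS3]
  abel

theorem IsAlmostSaitoStructure.dual_dual {V : VectorFields A X} {conn mul : X → X → X}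
    {e E : X} {r : ℂ} (hS : IsAlmostSaitoStructure V conn mul e E r)
    (he : Bijective (fun v : X => mul e v)) {mul2 conn2 starBack connBack : X → X → X}
    (hmul2 : ∀ x y : X, mul2 x y = mul x (invFun (fun v : X => mul e v) y))
    (hconn2 : ∀ x y : X, conn2 x y = conn x y - conn (mul2 x y) e)
    (hstarBack : ∀ x y : X, starBack x y = invFun (fun v : X => mul2 E v) (mul2 x y))
    (hconnBack : ∀ x y : X, connBack x y
      = conn2 x y + algebraMap ℂ A r • starBack x y - conn2 (starBack x y) E) :
    starBack = mul ∧ connBack = conn := by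
  have hm := hS.mul_unital
  have hmul2_unit : (fun v : X => mul2 E v) = invFun (fun v : X => mul e v) := by
    ext v
    rw [hmul2, hm.unit]
  have hstarBack_eq : ∀ x y, starBack x y = mul x y := by
    intro x y
    rw [hstarBack, hmul2_unit, invFun_invFun he, hmul2, hm.mul_invFun_mul_left he,
      rightInverse_invFun he.surjective]
  have hmul2_mul_unit : ∀ x y, mul2 (mul x y) E = mul2 x y := by
    intro x y
    rw [hmul2, hmul2, hm.assoc, hm.mul_invFun_mul_left he y, hm.mul_unit]
  refine ⟨funext₂ hstarBack_eq, funext₂ fun x y => ?_⟩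
  rw [hconnBack, hconn2, hconn2, hstarBack_eq, hmul2_mul_unit, hS.ASS3]
  abel

/-- Theorem 3.7 of the paper (almost duality for Saito structures):
(i) the dual Saito structure of the dual almost Saito structure (with any
parameter `r`) of a Saito structure is the original Saito structure;
(ii) the dual almost Saito structure with parameter `r` of the dual Saito
structure of an almost Saito structure with parameter `r` is the original
almost Saito structure. -/
theorem almost_duality
    (V : VectorFields A X) :
    (∀ conn mul : X → X → X, ∀ e E : X, ∀ r : ℂ,
      IsSaitoStructure V conn mul e E →
      Function.Bijective (fun v : X => mul E v) →
      ∀ star conn2 mulBack connBack : X → X → X,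
        (∀ x y : X, star x y = Function.invFun (fun v : X => mul E v) (mul x y)) →
        (∀ x y : X, conn2 x y
          = conn x y + algebraMap ℂ A r • star x y - conn (star x y) E) →
        (∀ x y : X, mulBack x y
          = star x (Function.invFun (fun v : X => star e v) y)) →
        (∀ x y : X, connBack x y = conn2 x y - conn2 (mulBack x y) e) →
        mulBack = mul ∧ connBack = conn) ∧
    (∀ conn mul : X → X → X, ∀ e E : X, ∀ r : ℂ,
      IsAlmostSaitoStructure V conn mul e E r →
      Function.Bijective (fun v : X => mul e v) →
      ∀ mul2 conn2 starBack connBack : X → X → X,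
        (∀ x y : X, mul2 x y = mul x (Function.invFun (fun v : X => mul e v) y)) →
        (∀ x y : X, conn2 x y = conn x y - conn (mul2 x y) e) →
        (∀ x y : X, starBack x y
          = Function.invFun (fun v : X => mul2 E v) (mul2 x y)) →
        (∀ x y : X, connBack x y
          = conn2 x y + algebraMap ℂ A r • starBack x y - conn2 (starBack x y) E) →
        starBack = mul ∧ connBack = conn) :=
  ⟨fun _ _ _ _ r hS hE _ _ _ _ hstar hconn2 hmulBack hconnBack =>
      hS.dual_dual hE r hstar hconn2 hmulBack hconnBack,
    fun _ _ _ _ _ hS he _ _ _ _ hmul2 hconn2 hstarBack hconnBack =>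
      hS.dual_dual he hmul2 hconn2 hstarBack hconnBack⟩
end

section
/- Let (M, ∇, 𝛁, ∗, ⋆, e, E) be a bi-flat F-manifold. Then (∇, ∗, E) is a Saito structure on M, and the second connection is determined by 𝛁_x y = ∇_x y − ∇_{x⋆y} E for all vector fields x, y; in other words, (𝛁, ⋆, e) is the dual almost Saito structure of (∇, ∗, E) with parameter r = 0. -/
universe u v

variable {A : Type u} {X : Type v} [CommRing A] [Algebra ℂ A]
  [AddCommGroup X] [Module A X]

/-- A bi-flat `F`-manifold (Arsie–Lorenzoni): two torsion-free flat connections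
`conn1, conn2` and two associative commutative multiplications `mul1, mul2`
with units `e, E` respectively, satisfying (SS1), (SS2), (SS3), (ASS1),
(ASS3) with `r = 0`, the invertibility of `U x = E ∗ x` with
`E ∗ (x ⋆ y) = x ∗ y`, and almost hydrodynamic equivalence of the two
connections. -/
structure IsBiFlat (V : VectorFields A X) (conn1 conn2 mul1 mul2 : X → X → X)
    (e E : X) : Prop where
  conn1_flat : IsTFFlatConnection V conn1
  conn2_flat : IsTFFlatConnection V conn2
  mul1_unital : IsUnitalMul (A := A) mul1 e
  mul2_unital : IsUnitalMul (A := A) mul2 E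
  SS1 : ∀ x y z : X,
    conn1 x (mul1 y z) - mul1 y (conn1 x z) - conn1 y (mul1 x z) + mul1 x (conn1 y z)
      = mul1 (V.bracket x y) z
  SS2 : ∀ x y : X,
    V.bracket E (mul1 x y) - mul1 (V.bracket E x) y - mul1 x (V.bracket E y) = mul1 x y
  SS3 : ∀ x : X, conn1 x e = 0
  ASS1 : ∀ x y z : X,
    conn2 x (mul2 y z) - mul2 y (conn2 x z) - conn2 y (mul2 x z) + mul2 x (conn2 y z)
      = mul2 (V.bracket x y) z
  ASS3 : ∀ x : X, conn2 x E = 0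
  U_bijective : Function.Bijective fun v : X => mul1 E v
  U_compat : ∀ x y : X, mul1 E (mul2 x y) = mul1 x y
  hydro : ∀ x y z : X,
    conn2 x (mul1 y z) - conn2 y (mul1 x z) = conn1 x (mul1 y z) - conn1 y (mul1 x z)

/-!
Almost hydrodynamic equivalence with `x = e` shows that `𝛁_y z - ∇_y z` depends only on `y ∗ z`;
comparing `(y, z)` with `(y ⋆ z, E)`, which have the same product, and using `𝛁E = 0` gives
`𝛁_x y = ∇_x y - ∇_{x⋆y} E`.

For (SS4), let `H = ∇²E`. The Lie derivative along `E` of a torsion-free flat connection is its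
Hessian of `E`, so `L_E 𝛁 = 0` and `L_E ∇ = H`. By (SS2) and `E ∗ (x ⋆ y) = x ∗ y`, `L_E ⋆ = 0`,
so applying `L_E` to `𝛁 = ∇ - ∇_{·⋆·} E` gives `H(x, z) = H(x ⋆ z, E)`. Then
`H(w, E) = H(E ∗ w, e) = 0`, because `∇e = 0` and `∇_e E = e`.
-/

/-- `(∇²E)(x, y)`; (SS4) is its vanishing. -/
def hessian (conn : X → X → X) (E x y : X) : X := conn x (conn y E) - conn (conn x y) E

namespace VectorFields

variable (V : VectorFields A X)

theorem bracket_add_right (x y z : X) :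
    V.bracket x (y + z) = V.bracket x y + V.bracket x z := by
  rw [V.bracket_antisymm, V.bracket_add_left, neg_add, ← V.bracket_antisymm,
    ← V.bracket_antisymm]

theorem bracket_sub_right (x y z : X) :
    V.bracket x (y - z) = V.bracket x y - V.bracket x z :=
  map_sub (AddMonoidHom.mk' (V.bracket x) (V.bracket_add_right x)) y z

end VectorFields

namespace IsTFFlatConnection

variable {V : VectorFields A X} {conn : X → X → X}

theorem zero_left (hc : IsTFFlatConnection V conn) (z : X) : conn 0 z = 0 :=
  map_zero (AddMonoidHom.mk' (conn · z) (hc.add_left · · z))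

theorem sub_right (hc : IsTFFlatConnection V conn) (x y z : X) :
    conn x (y - z) = conn x y - conn x z :=
  map_sub (AddMonoidHom.mk' (conn x) (hc.add_right x)) y z

theorem zero_right (hc : IsTFFlatConnection V conn) (x : X) : conn x 0 = 0 :=
  map_zero (AddMonoidHom.mk' (conn x) (hc.add_right x))

theorem bracket_self (hc : IsTFFlatConnection V conn) (x : X) : V.bracket x x = 0 := by
  rw [← hc.torsion_free, sub_self]

/-- The Lie derivative `L_E ∇` of a torsion-free flat connection is the Hessian of `E`. -/
theorem lieDeriv_eq_hessian (hc : IsTFFlatConnection V conn) (E x z : X) :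
    V.bracket E (conn x z) - conn (V.bracket E x) z - conn x (V.bracket E z)
      = hessian conn E x z := by
  rw [← hc.flat E x z, ← hc.torsion_free E (conn x z), ← hc.torsion_free E z, hc.sub_right,
    hessian]
  abel

end IsTFFlatConnection

namespace IsUnitalMul

omit [Algebra ℂ A]

variable {mul : X → X → X} {e : X}

theorem add_right (hm : IsUnitalMul (A := A) mul e) (x y z : X) :
    mul x (y + z) = mul x y + mul x z := by
  rw [hm.comm, hm.add_left, hm.comm y, hm.comm z]

theorem zero_left (hm : IsUnitalMul (A := A) mul e) (y : X) : mul 0 y = 0 :=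
  map_zero (AddMonoidHom.mk' (mul · y) (hm.add_left · · y))

theorem mul_unit_s11 (hm : IsUnitalMul (A := A) mul e) (x : X) : mul x e = x := by
  rw [hm.comm, hm.unit]

end IsUnitalMul

namespace IsBiFlat

variable {V : VectorFields A X} {conn1 conn2 mul1 mul2 : X → X → X} {e E : X}

theorem conn2_sub_conn1_eq (h : IsBiFlat V conn1 conn2 mul1 mul2 e E) (y z : X) :
    conn2 y z - conn1 y z = conn2 e (mul1 y z) - conn1 e (mul1 y z) := by
  have hydro := h.hydro e y z
  rw [h.mul1_unital.unit] at hydro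
  linear_combination (norm := module) -hydro

theorem conn2_eq (h : IsBiFlat V conn1 conn2 mul1 mul2 e E) (x y : X) :
    conn2 x y = conn1 x y - conn1 (mul2 x y) E := by
  have hE := h.conn2_sub_conn1_eq (mul2 x y) E
  rw [h.mul1_unital.comm _ E, h.U_compat, ← h.conn2_sub_conn1_eq, h.ASS3, zero_sub] at hE
  linear_combination (norm := module) -hE

theorem mul2_mul1_euler_unit (h : IsBiFlat V conn1 conn2 mul1 mul2 e E) (w : X) :
    mul2 (mul1 E w) e = w :=
  h.U_bijective.injective (by simp only [h.U_compat, h.mul1_unital.mul_unit_s11])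

theorem conn1_unit_euler (h : IsBiFlat V conn1 conn2 mul1 mul2 e E) : conn1 e E = e := by
  have hSS2 := h.SS2 e e
  rw [h.mul1_unital.unit, h.mul1_unital.mul_unit_s11, h.mul1_unital.unit] at hSS2
  have hEe : V.bracket E e = -e := by linear_combination (norm := module) -hSS2
  rw [← sub_zero (conn1 e E), ← h.SS3 E, h.conn1_flat.torsion_free, V.bracket_antisymm, hEe,
    neg_neg]

theorem bracket_euler_mul2 (h : IsBiFlat V conn1 conn2 mul1 mul2 e E) (x z : X) :
    V.bracket E (mul2 x z) = mul2 (V.bracket E x) z + mul2 x (V.bracket E z) := by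
  apply h.U_bijective.injective
  have hEU := h.SS2 E (mul2 x z)
  rw [h.U_compat, h.conn1_flat.bracket_self, h.mul1_unital.zero_left] at hEU
  simp only [h.mul1_unital.add_right, h.U_compat]
  linear_combination (norm := module) h.SS2 x z - hEU

theorem hessian_eq_hessian_mul2 (h : IsBiFlat V conn1 conn2 mul1 mul2 e E) (x z : X) :
    hessian conn1 E x z = hessian conn1 E (mul2 x z) E := by
  have hc1 := h.conn1_flat
  have hc2 := h.conn2_flat
  have hLie2 :
      V.bracket E (conn2 x z) - conn2 (V.bracket E x) z - conn2 x (V.bracket E z) = 0 := by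
    rw [hc2.lieDeriv_eq_hessian, hessian, h.ASS3, hc2.zero_right, h.ASS3, sub_zero]
  have hLieC : V.bracket E (conn1 (mul2 x z) E) - conn1 (V.bracket E (mul2 x z)) E
      = hessian conn1 E (mul2 x z) E := by
    rw [← hc1.lieDeriv_eq_hessian, hc1.bracket_self, hc1.zero_right, sub_zero]
  simp only [h.conn2_eq, V.bracket_sub_right] at hLie2
  rw [← hc1.lieDeriv_eq_hessian, ← hLieC, h.bracket_euler_mul2, hc1.add_left]
  linear_combination (norm := module) hLie2

theorem hessian_conn1_eq_zero (h : IsBiFlat V conn1 conn2 mul1 mul2 e E) (x z : X) :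
    hessian conn1 E x z = 0 := by
  have hessian_euler (w : X) : hessian conn1 E w E = 0 := by
    rw [← h.mul2_mul1_euler_unit w, ← h.hessian_eq_hessian_mul2, hessian, h.conn1_unit_euler,
      h.SS3, h.conn1_flat.zero_left, sub_zero]
  rw [h.hessian_eq_hessian_mul2, hessian_euler]

end IsBiFlat

/-- Lemma 4.2 of the paper: a bi-flat `F`-manifold gives a Saito structure
`(∇, ∗, E)`, and the second connection is `𝛁ₓ y = ∇ₓ y - ∇_{x ⋆ y} E`;
i.e. `(𝛁, ⋆, e)` is the dual almost Saito structure of `(∇, ∗, E)` with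
parameter `r = 0`. -/
theorem biflat_gives_saito
    (V : VectorFields A X) (conn1 conn2 mul1 mul2 : X → X → X) (e E : X)
    (h : IsBiFlat V conn1 conn2 mul1 mul2 e E) :
    IsSaitoStructure V conn1 mul1 e E ∧
    ∀ x y : X, conn2 x y = conn1 x y - conn1 (mul2 x y) E :=
  ⟨⟨h.conn1_flat, h.mul1_unital, h.SS1, h.SS2, h.SS3, h.hessian_conn1_eq_zero⟩, h.conn2_eq⟩
end
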